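/- arXiv:0906.3469 — 3 statements merged into one kernel-verified Lean document; each statement's English description precedes it below -/
import Mathlib

section
/- Let d ≥ 1, let c ∈ ℝ^d, r ≥ 0, let a, w ∈ ℝ^d with w ≠ 0, and let L = {a + t·w : t ∈ ℝ}. If L meets both the closed ball with center c and radius r and the closed ball with center −c and radius r, then the line {t·w : t ∈ ℝ} through the origin with the same direction meets the closed ball with center c and radius r. (Hence a line stabbing a family of balls that is symmetric about the origin can be translated to pass through the origin while still stabbing each ball of the family.) -/
open scoped RealInnerProductSpace

/-- If the line `{a + t • w : t ∈ ℝ}` meets both the closed ball around `c` and the closed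
ball around `-c` (both of radius `r`), then the translated line through the origin with the
same direction `w` meets the closed ball around `c` of radius `r`. -/
theorem line_through_origin_stabs_of_symmetric (d : ℕ) (hd : 1 ≤ d)
    (c a w : EuclideanSpace ℝ (Fin d)) (r : ℝ) (hr : 0 ≤ r) (hw : w ≠ 0)
    (h1 : ∃ t : ℝ, ‖(a + t • w) - c‖ ≤ r)
    (h2 : ∃ t : ℝ, ‖(a + t • w) - (-c)‖ ≤ r) :
    ∃ t : ℝ, ‖t • w - c‖ ≤ r := by
  obtain ⟨t1, h1⟩ := h1
  obtain ⟨t2, h2⟩ := h2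
  refine ⟨(t1 - t2) / 2, ?_⟩
  have key : ((t1 - t2) / 2) • w - c
      = ((1:ℝ)/2) • (((a + t1 • w) - c) - ((a + t2 • w) - (-c))) := by
    module
  rw [key]
  calc ‖((1:ℝ)/2) • (((a + t1 • w) - c) - ((a + t2 • w) - (-c)))‖
      = (1/2) * ‖(((a + t1 • w) - c) - ((a + t2 • w) - (-c)))‖ := by
        rw [norm_smul]; norm_num
    _ ≤ (1/2) * (r + r) := by
        have := norm_sub_le ((a + t1 • w) - c) ((a + t2 • w) - (-c))
        nlinarith
    _ = r := by ring
end

section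
/- Let n ≥ 1 be an integer, let s > 0, and for u ∈ {1,…,n} let c_u = (cos((u−1)π/n), sin((u−1)π/n)) ∈ ℝ². If p ∈ ℝ² satisfies |⟨c_u, p⟩| ≥ s for every u ∈ {1,…,n}, then ‖p‖ ≥ s·√(2/(1 − cos(π/n))). -/
open scoped RealInnerProductSpace
open Real

/-- The unit vector in the plane with angle `(u−1)·π/n`. -/
noncomputable def dirVec (n u : ℕ) : EuclideanSpace ℝ (Fin 2) :=
  (WithLp.equiv 2 (Fin 2 → ℝ)).symm
    ![Real.cos (((u : ℝ) - 1) * Real.pi / n), Real.sin (((u : ℝ) - 1) * Real.pi / n)]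

/-!
Extend the directions by `c_{n+1} = -c_1`. The numbers `⟪c_u, p⟫`, `u = 1, …, n+1`, then start
and end with opposite signs, so two consecutive ones `⟪c_u, p⟫`, `⟪c_{u+1}, p⟫` have opposite
signs; both have modulus at least `s`, hence `2s ≤ |⟪c_u - c_{u+1}, p⟫| ≤ ‖c_u - c_{u+1}‖ ‖p‖`
with `‖c_u - c_{u+1}‖ = √(2 - 2 cos (π/n))`.
-/

theorem exists_mul_nonpos_succ {α : Type*} [CommRing α] [LinearOrder α] [IsStrictOrderedRing α]
    (f : ℕ → α) {a b : ℕ} (hab : a < b) (h : f a * f b ≤ 0) :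
    ∃ u ∈ Finset.Ico a b, f u * f (u + 1) ≤ 0 := by
  induction b, hab using Nat.le_induction with
  | base => exact ⟨a, by simp, h⟩
  | succ b hab ih =>
    by_cases hb : f a * f b ≤ 0
    · obtain ⟨u, hu, hu'⟩ := ih hb
      exact ⟨u, Finset.Ico_subset_Ico_right b.le_succ hu, hu'⟩
    · refine ⟨b, Finset.mem_Ico.2 ⟨Nat.le_of_succ_le hab, b.lt_succ_self⟩, ?_⟩
      have hb : 0 < f a * f b := not_le.1 hb
      refine nonpos_of_mul_nonpos_right ?_ hb
      calc f a * f b * (f b * f (b + 1)) = f b * f b * (f a * f (b + 1)) := by ring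
        _ ≤ 0 := mul_nonpos_of_nonneg_of_nonpos (mul_self_nonneg _) h

theorem abs_sub_eq_abs_add_abs_of_mul_nonpos {α : Type*} [CommRing α] [LinearOrder α]
    [IsStrictOrderedRing α] {a b : α} (h : a * b ≤ 0) : |a - b| = |a| + |b| := by
  rw [sub_eq_add_neg, ← abs_neg b, abs_add_eq_add_abs_iff]
  rcases mul_nonpos_iff.1 h with ⟨ha, hb⟩ | ⟨ha, hb⟩
  · exact Or.inl ⟨ha, neg_nonneg.2 hb⟩
  · exact Or.inr ⟨ha, neg_nonpos.2 hb⟩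

theorem Real.sqrt_two_div_one_sub (c : ℝ) : √(2 / (1 - c)) = 2 / √(2 - 2 * c) := by
  have h : 2 / (1 - c) = 2 ^ 2 / (2 - 2 * c) := by
    rw [show 2 - 2 * c = 2 * (1 - c) by ring, mul_comm, ← div_div]; ring
  rw [h, Real.sqrt_div (by positivity), Real.sqrt_sq zero_le_two]

theorem Real.cos_pi_div_lt_one {n : ℕ} (hn : n ≠ 0) : cos (π / n) < 1 := by
  have hpos : 0 < π / n := by positivity
  have hlt : π / n < 2 * π := by
    calc π / n ≤ π := div_le_self pi_pos.le (by exact_mod_cast Nat.one_le_iff_ne_zero.2 hn)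
      _ < 2 * π := by linarith [pi_pos]
  refine (cos_le_one _).lt_of_ne fun h => hpos.ne' ?_
  exact (cos_eq_one_iff_of_lt_of_lt (by linarith) hlt).1 h

theorem dirVec_self_add_one {n : ℕ} (hn : n ≠ 0) : dirVec n (n + 1) = -dirVec n 1 := by
  have hπ : (n : ℝ) * π / n = π := by field_simp
  ext i
  fin_cases i <;> simp [dirVec, hπ]

theorem norm_dirVec_sub_dirVec_succ (n u : ℕ) :
    ‖dirVec n u - dirVec n (u + 1)‖ = √(2 - 2 * cos (π / n)) := by
  have hb : ((u + 1 : ℕ) - 1 : ℝ) * π / n = (u - 1) * π / n + π / n := by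
    push_cast; ring
  rw [EuclideanSpace.norm_eq]
  congr 1
  simp only [dirVec, hb, Fin.sum_univ_two, PiLp.sub_apply, WithLp.equiv_symm_apply,
    Matrix.cons_val_zero, Matrix.cons_val_one, Real.norm_eq_abs, sq_abs, cos_add, sin_add]
  set a : ℝ := ((u : ℝ) - 1) * π / n
  linear_combination
    (1 - 2 * cos (π / n) + sin (π / n) ^ 2 + cos (π / n) ^ 2) * sin_sq_add_cos_sq a +
      sin_sq_add_cos_sq (π / n)

theorem norm_lower_bound_of_wedges_general (n : ℕ) (hn : 1 ≤ n) (s : ℝ)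
    (p : EuclideanSpace ℝ (Fin 2))
    (h : ∀ u ∈ Finset.Icc 1 n, s ≤ |⟪dirVec n u, p⟫|) :
    s * Real.sqrt (2 / (1 - Real.cos (Real.pi / n))) ≤ ‖p‖ := by
  have hn0 : n ≠ 0 := Nat.one_le_iff_ne_zero.1 hn
  set f : ℕ → ℝ := fun u => ⟪dirVec n u, p⟫ with hf
  have hflip : f (n + 1) = -f 1 := by simp [hf, dirVec_self_add_one hn0, inner_neg_left]
  have hbound : ∀ u ∈ Finset.Icc 1 (n + 1), s ≤ |f u| := by
    intro u hu
    rcases (Finset.mem_Icc.1 hu).2.eq_or_lt with rfl | hlt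
    · rw [hflip, abs_neg]
      exact h 1 (Finset.mem_Icc.2 ⟨le_rfl, hn⟩)
    · exact h u (Finset.mem_Icc.2 ⟨(Finset.mem_Icc.1 hu).1, Nat.lt_succ_iff.1 hlt⟩)
  obtain ⟨u, hu, hsign⟩ := exists_mul_nonpos_succ f (a := 1) (b := n + 1) (by omega) <| by
    rw [hflip, mul_neg]; exact neg_nonpos.2 (mul_self_nonneg _)
  rw [Finset.mem_Ico] at hu
  have h2s : 2 * s ≤ √(2 - 2 * cos (π / n)) * ‖p‖ := calc
    2 * s ≤ |f u| + |f (u + 1)| := by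
      linarith [hbound u (Finset.mem_Icc.2 ⟨hu.1, hu.2.le⟩),
        hbound (u + 1) (Finset.mem_Icc.2 ⟨hu.1.trans u.le_succ, hu.2⟩)]
    _ = |⟪dirVec n u - dirVec n (u + 1), p⟫| := by
      rw [inner_sub_left, abs_sub_eq_abs_add_abs_of_mul_nonpos hsign]
    _ ≤ √(2 - 2 * cos (π / n)) * ‖p‖ := by
      rw [← norm_dirVec_sub_dirVec_succ]; exact abs_real_inner_le_norm _ _
  have hpos : 0 < √(2 - 2 * cos (π / n)) := sqrt_pos.2 (by linarith [cos_pi_div_lt_one hn0])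
  rw [sqrt_two_div_one_sub, ← mul_div_assoc, div_le_iff₀ hpos]
  linarith

/-- If `|⟪c_u, p⟫| ≥ s` for all the `n` regularly spaced unit directions `c_u`,
then `‖p‖ ≥ s·√(2/(1 − cos(π/n)))`. -/
theorem norm_lower_bound_of_wedges (n : ℕ) (hn : 1 ≤ n) (s : ℝ) (hs : 0 < s)
    (p : EuclideanSpace ℝ (Fin 2))
    (h : ∀ u ∈ Finset.Icc 1 n, s ≤ |⟪dirVec n u, p⟫|) :
    s * Real.sqrt (2 / (1 - Real.cos (Real.pi / n))) ≤ ‖p‖ :=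
  norm_lower_bound_of_wedges_general n hn s p h
end

section
/- Let n, k ≥ 1 be integers and let G be a simple (undirected, loopless) graph on vertex set {1,…,n}. For x ∈ ℝ^k let D₀(x) = |{(i, v) : 1 ≤ i ≤ k, 1 ≤ v ≤ n, x_i = v}| and D_E(x) = |{(i, j, u, v) : 1 ≤ i < j ≤ k, u, v ∈ {1,…,n}, u adjacent to v in G, (x_i − u) + n·(x_j − v) = 0}|. Then D₀(x) + D_E(x) = k + k(k−1)/2 if and only if every coordinate of x is an integer in {1,…,n} and the coordinates x_1,…,x_k are pairwise adjacent in G (i.e., {x_1,…,x_k} is a clique of size k). Consequently, there exists x ∈ ℝ^k with D₀(x) + D_E(x) = k + k(k−1)/2 if and only if G contains a clique of size k. -/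
open scoped Classical

/-- `D₀(x)`: the number of scaffolding hyperplanes `{x : x_i = v}` (for `i ∈ {1,…,k}`,
`v ∈ {1,…,n}`) containing `x ∈ ℝ^k`. -/
noncomputable def scafDepth (n k : ℕ) (x : Fin k → ℝ) : ℕ :=
  ((Finset.univ ×ˢ Finset.Icc 1 n).filter
    fun p : Fin k × ℕ => x p.1 = (p.2 : ℝ)).card

/-- `D_E(x)`: the number of tuples `(i, j, u, v)` with `1 ≤ i < j ≤ k`,
`u, v ∈ {1,…,n}`, `u` adjacent to `v`, and `(x_i − u) + n·(x_j − v) = 0`. -/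
noncomputable def edgeDepth (n k : ℕ) (Adj : ℕ → ℕ → Prop) (x : Fin k → ℝ) : ℕ :=
  (((Finset.univ ×ˢ Finset.univ) ×ˢ Finset.Icc 1 n ×ˢ Finset.Icc 1 n).filter
    fun q : (Fin k × Fin k) × ℕ × ℕ =>
      q.1.1 < q.1.2 ∧ Adj q.2.1 q.2.2 ∧
        (x q.1.1 - q.2.1) + n * (x q.1.2 - q.2.2) = 0).card

lemma uniq_rep {n u v u' v' : ℕ} (hu1 : 1 ≤ u) (hu2 : u ≤ n) (hu1' : 1 ≤ u') (hu2' : u' ≤ n)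
    (h : u + n * v = u' + n * v') : u = u' ∧ v = v' := by
  have h1 : (u - 1) + v * n = (u' - 1) + v' * n := by
    rw [mul_comm v n, mul_comm v' n]; omega
  have h2 : ((u - 1) + v * n) % n = u - 1 := by
    rw [Nat.add_mul_mod_self_right]; exact Nat.mod_eq_of_lt (by omega)
  have h3 : ((u' - 1) + v' * n) % n = u' - 1 := by
    rw [Nat.add_mul_mod_self_right]; exact Nat.mod_eq_of_lt (by omega)
  have huu : u = u' := by rw [h1] at h2; omega
  have hmul : v * n = v' * n := by omega
  exact ⟨huu, Nat.eq_of_mul_eq_mul_right (by omega) hmul⟩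

lemma card_lt_pairs (k : ℕ) :
    ((Finset.univ : Finset (Fin k × Fin k)).filter fun p => p.1 < p.2).card
      = k * (k - 1) / 2 := by
  classical
  set S := (Finset.univ : Finset (Fin k × Fin k)).filter (fun p => p.1 < p.2) with hS
  set T := (Finset.univ : Finset (Fin k × Fin k)).filter (fun p => p.2 < p.1) with hT
  have hTS : T = S.image Prod.swap := by
    ext p
    simp only [hS, hT, Finset.mem_image, Finset.mem_filter, Finset.mem_univ, true_and]
    constructor
    · intro h; exact ⟨p.swap, h, Prod.swap_swap p⟩
    · rintro ⟨q, hq, rfl⟩; exact hq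
  have hST : S.card = T.card := by
    rw [hTS, Finset.card_image_of_injective _ Prod.swap_injective]
  have hdisj : Disjoint S T := by
    rw [Finset.disjoint_left]; intro p hp hp'
    simp only [hS, hT, Finset.mem_filter] at hp hp'
    exact absurd (hp.2.trans hp'.2) (lt_irrefl _)
  have hunion : S ∪ T = (Finset.univ : Finset (Fin k)).offDiag := by
    ext p
    simp only [hS, hT, Finset.mem_union, Finset.mem_filter, Finset.mem_offDiag,
      Finset.mem_univ, true_and]
    constructor
    · rintro (h | h)
      · exact ne_of_lt h
      · exact (ne_of_lt h).symm
    · intro h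
      rcases lt_or_gt_of_ne h with h | h
      · exact Or.inl h
      · exact Or.inr h
  have hcard : S.card + T.card = k * k - k := by
    rw [← Finset.card_union_of_disjoint hdisj, hunion, Finset.offDiag_card,
      Finset.card_univ, Fintype.card_fin]
  have hkk : k * k - k = k * (k - 1) := by
    cases k with
    | zero => simp
    | succ m => rw [Nat.succ_sub_one, Nat.mul_succ, Nat.add_sub_cancel]
  rw [hkk] at hcard
  omega

/-- A point `x ∈ ℝ^k` has `D₀(x) + D_E(x) = k + k(k−1)/2` iff `x` is a grid point with
integer coordinates in `{1,…,n}` whose coordinates are pairwise adjacent (a `k`-clique);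
consequently such a point exists iff the graph contains a clique of size `k`. -/
theorem depth_iff_clique (n k : ℕ) (hn : 1 ≤ n) (hk : 1 ≤ k)
    (Adj : ℕ → ℕ → Prop) (hsym : ∀ u v, Adj u v → Adj v u) (hirr : ∀ u, ¬Adj u u)
    (hsupp : ∀ u v, Adj u v → u ∈ Finset.Icc 1 n ∧ v ∈ Finset.Icc 1 n) :
    (∀ x : Fin k → ℝ,
      (scafDepth n k x + edgeDepth n k Adj x = k + k * (k - 1) / 2 ↔
        ∃ X : Fin k → ℕ, (∀ i, X i ∈ Finset.Icc 1 n) ∧ (∀ i, x i = (X i : ℝ)) ∧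
          ∀ i j : Fin k, i ≠ j → Adj (X i) (X j)))
    ∧ ((∃ x : Fin k → ℝ,
          scafDepth n k x + edgeDepth n k Adj x = k + k * (k - 1) / 2) ↔
        ∃ X : Fin k → ℕ, (∀ i, X i ∈ Finset.Icc 1 n) ∧
          ∀ i j : Fin k, i ≠ j → Adj (X i) (X j)) := by
  classical
  have main : ∀ x : Fin k → ℝ,
      scafDepth n k x + edgeDepth n k Adj x = k + k * (k - 1) / 2 ↔
        ∃ X : Fin k → ℕ, (∀ i, X i ∈ Finset.Icc 1 n) ∧ (∀ i, x i = (X i : ℝ)) ∧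
          ∀ i j : Fin k, i ≠ j → Adj (X i) (X j) := by
    intro x
    set A := ((Finset.univ ×ˢ Finset.Icc 1 n).filter
      fun p : Fin k × ℕ => x p.1 = (p.2 : ℝ)) with hA
    set B := (((Finset.univ ×ˢ Finset.univ) ×ˢ Finset.Icc 1 n ×ˢ Finset.Icc 1 n).filter
      fun q : (Fin k × Fin k) × ℕ × ℕ =>
        q.1.1 < q.1.2 ∧ Adj q.2.1 q.2.2 ∧
          (x q.1.1 - q.2.1) + n * (x q.1.2 - q.2.2) = 0) with hB
    set S := (Finset.univ : Finset (Fin k × Fin k)).filter (fun p => p.1 < p.2) with hS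
    have hsA : scafDepth n k x = A.card := rfl
    have hsB : edgeDepth n k Adj x = B.card := rfl
    have hAinj : Set.InjOn (fun p : Fin k × ℕ => p.1) A := by
      intro p hp q hq h
      have h' : p.1 = q.1 := h
      simp only [hA, Finset.coe_filter, Set.mem_setOf_eq] at hp hq
      have hv : (p.2 : ℝ) = q.2 := by rw [← hp.2, ← hq.2, h']
      exact Prod.ext h' (Nat.cast_injective hv)
    have hBkey : ∀ q q' : (Fin k × Fin k) × ℕ × ℕ, q ∈ B → q' ∈ B → q.1 = q'.1 → q = q' := by
      intro q q' hq hq' h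
      simp only [hB, Finset.mem_filter, Finset.mem_product, Finset.mem_Icc] at hq hq'
      obtain ⟨⟨-, hu, hv⟩, -, hadj, heq⟩ := hq
      obtain ⟨⟨-, hu', hv'⟩, -, hadj', heq'⟩ := hq'
      rw [← h] at heq'
      have hr : (q.2.1 : ℝ) + n * q.2.2 = q'.2.1 + n * q'.2.2 := by linarith
      have hnat : q.2.1 + n * q.2.2 = q'.2.1 + n * q'.2.2 := by exact_mod_cast hr
      obtain ⟨e1, e2⟩ := uniq_rep hu.1 hu.2 hu'.1 hu'.2 hnat
      exact Prod.ext h (Prod.ext e1 e2)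
    have hBinj : Set.InjOn (fun q : (Fin k × Fin k) × ℕ × ℕ => q.1) B := by
      intro q hq q' hq' h
      exact hBkey q q' (by simpa using hq) (by simpa using hq') h
    have hAle : A.card ≤ k := by
      calc A.card ≤ (Finset.univ : Finset (Fin k)).card :=
            Finset.card_le_card_of_injOn _ (fun p _ => Finset.mem_univ _) hAinj
        _ = k := by simp
    have hBsub : B.image (fun q => q.1) ⊆ S := by
      intro p hp
      simp only [Finset.mem_image] at hp
      obtain ⟨q, hq, rfl⟩ := hp
      simp only [hB, Finset.mem_filter] at hq
      simp only [hS, Finset.mem_filter, Finset.mem_univ, true_and]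
      exact hq.2.1
    have hBle : B.card ≤ k * (k - 1) / 2 := by
      calc B.card = (B.image (fun q => q.1)).card :=
            (Finset.card_image_of_injOn hBinj).symm
        _ ≤ S.card := Finset.card_le_card hBsub
        _ = k * (k - 1) / 2 := card_lt_pairs k
    constructor
    · intro hsum
      rw [hsA, hsB] at hsum
      have hAcard : A.card = k := by omega
      have hBcard : B.card = k * (k - 1) / 2 := by omega
      have hAsurj : ∀ i : Fin k, ∃ v, (i, v) ∈ A := by
        have himg : A.image (fun p => p.1) = Finset.univ := by
          apply Finset.eq_univ_of_card
          rw [Finset.card_image_of_injOn hAinj, hAcard]; simp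
        intro i
        have hi : i ∈ A.image (fun p => p.1) := himg ▸ Finset.mem_univ i
        obtain ⟨p, hp, hpe⟩ := Finset.mem_image.mp hi
        exact ⟨p.2, by rw [← hpe, Prod.mk.eta]; exact hp⟩
      choose X hX using hAsurj
      have hXmem : ∀ i, X i ∈ Finset.Icc 1 n := by
        intro i
        have h := hX i
        simp only [hA, Finset.mem_filter, Finset.mem_product] at h
        exact h.1.2
      have hXval : ∀ i, x i = (X i : ℝ) := by
        intro i
        have h := hX i
        simp only [hA, Finset.mem_filter] at h
        exact h.2
      have hBimg : B.image (fun q => q.1) = S := by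
        apply Finset.eq_of_subset_of_card_le hBsub
        rw [Finset.card_image_of_injOn hBinj, hBcard, hS, card_lt_pairs]
      have hadj_lt : ∀ i j : Fin k, i < j → Adj (X i) (X j) := by
        intro i j hij
        have hmem : (i, j) ∈ S := by
          simp only [hS, Finset.mem_filter, Finset.mem_univ, true_and]; exact hij
        rw [← hBimg] at hmem
        obtain ⟨q, hq, hqe⟩ := Finset.mem_image.mp hmem
        simp only [hB, Finset.mem_filter, Finset.mem_product, Finset.mem_Icc] at hq
        obtain ⟨⟨-, hu, hv⟩, -, hadj, heq⟩ := hq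
        have hi : q.1.1 = i := by rw [hqe]
        have hj : q.1.2 = j := by rw [hqe]
        rw [hi, hj, hXval i, hXval j] at heq
        have hXin := Finset.mem_Icc.mp (hXmem i)
        have hr : (X i : ℝ) + n * X j = q.2.1 + n * q.2.2 := by linarith
        have hnat : X i + n * X j = q.2.1 + n * q.2.2 := by exact_mod_cast hr
        obtain ⟨e1, e2⟩ := uniq_rep hXin.1 hXin.2 hu.1 hu.2 hnat
        rw [e1, e2]; exact hadj
      refine ⟨X, hXmem, hXval, fun i j hij => ?_⟩
      rcases lt_or_gt_of_ne hij with h | h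
      · exact hadj_lt i j h
      · exact hsym _ _ (hadj_lt j i h)
    · rintro ⟨X, hXmem, hXval, hXadj⟩
      have hAeq : A = Finset.univ.image (fun i : Fin k => (i, X i)) := by
        ext p
        simp only [hA, Finset.mem_filter, Finset.mem_product, Finset.mem_image,
          Finset.mem_univ, true_and]
        constructor
        · rintro ⟨hmem, hval⟩
          refine ⟨p.1, ?_⟩
          have hcast : (X p.1 : ℝ) = p.2 := by rw [← hXval p.1, hval]
          have hn2 : X p.1 = p.2 := Nat.cast_injective hcast
          rw [hn2, Prod.mk.eta]
        · rintro ⟨i, rfl⟩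
          exact ⟨hXmem i, hXval i⟩
      have hBeq : B = S.image (fun p : Fin k × Fin k => (p, (X p.1, X p.2))) := by
        ext q
        constructor
        · intro hq
          rw [hB, Finset.mem_filter] at hq
          obtain ⟨hmem, hlt, hadj, heq⟩ := hq
          rw [Finset.mem_product] at hmem
          obtain ⟨-, hmem2⟩ := hmem
          rw [Finset.mem_product, Finset.mem_Icc, Finset.mem_Icc] at hmem2
          obtain ⟨hu, hv⟩ := hmem2
          refine Finset.mem_image.mpr ⟨q.1, ?_, ?_⟩
          · rw [hS, Finset.mem_filter]; exact ⟨Finset.mem_univ _, hlt⟩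
          · rw [hXval q.1.1, hXval q.1.2] at heq
            have hXin := Finset.mem_Icc.mp (hXmem q.1.1)
            have hr : (X q.1.1 : ℝ) + n * X q.1.2 = q.2.1 + n * q.2.2 := by linarith
            have hnat : X q.1.1 + n * X q.1.2 = q.2.1 + n * q.2.2 := by exact_mod_cast hr
            obtain ⟨e1, e2⟩ := uniq_rep hXin.1 hXin.2 hu.1 hu.2 hnat
            exact Prod.ext rfl (Prod.ext e1 e2)
        · intro hq
          obtain ⟨p, hp, rfl⟩ := Finset.mem_image.mp hq
          rw [hS, Finset.mem_filter] at hp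
          have hlt := hp.2
          have h1 := hXmem p.1
          have h2 := hXmem p.2
          rw [hB, Finset.mem_filter]
          refine ⟨Finset.mem_product.mpr ⟨Finset.mem_product.mpr
              ⟨Finset.mem_univ _, Finset.mem_univ _⟩,
              Finset.mem_product.mpr ⟨h1, h2⟩⟩, hlt,
            hXadj p.1 p.2 (ne_of_lt hlt), ?_⟩
          show (x p.1 - (X p.1 : ℝ)) + n * (x p.2 - (X p.2 : ℝ)) = 0
          rw [hXval p.1, hXval p.2]; ring
      have hA' : A.card = k := by
        rw [hAeq, Finset.card_image_of_injective _ (fun a b h => congrArg Prod.fst h)]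
        simp
      have hB' : B.card = k * (k - 1) / 2 := by
        rw [hBeq, Finset.card_image_of_injective _
          (fun a b h => congrArg Prod.fst h), hS, card_lt_pairs]
      rw [hsA, hsB, hA', hB']
  refine ⟨main, ?_⟩
  constructor
  · rintro ⟨x, hx⟩
    obtain ⟨X, h1, -, h3⟩ := (main x).mp hx
    exact ⟨X, h1, h3⟩
  · rintro ⟨X, h1, h3⟩
    exact ⟨fun i => (X i : ℝ), (main _).mpr ⟨X, h1, fun i => rfl, h3⟩⟩
end
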